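/- arXiv:2101.01075 — 2 statements merged into one kernel-verified Lean document; each statement's English description precedes it below -/
import Mathlib

section
/- Let V be a finite-dimensional ℚ-vector space and T : V → V a semisimple linear endomorphism. Then the induced endomorphism Λ²T on the exterior square Λ²V is semisimple. -/
/-!
The surjection `V ⊗ V → Λ²V`, `x ⊗ y ↦ x ∧ y`, intertwines `T ⊗ T` with `Λ²T`, so the
`ℚ[X]`-module `Λ²V` defined by `Λ²T` is a quotient of the one defined by `T ⊗ T`, and quotients of
semisimple modules are semisimple. Finally `T ⊗ T = (T ⊗ 1)(1 ⊗ T)` is semisimple: both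
factors are annihilated by the squarefree polynomial `minpoly T`, and over a perfect field a
product of commuting semisimple endomorphisms is semisimple.
-/

open ExteriorAlgebra

open Polynomial TensorProduct

namespace exteriorPower

variable (R M : Type*) [CommRing R] [AddCommGroup M] [Module R M]

noncomputable def wedge : M ⊗[R] M →ₗ[R] ⋀[R]^2 M :=
  lift <| LinearMap.mk₂ R (fun x y ↦ ιMulti R 2 ![x, y])
    (fun _ _ _ ↦ by ext; simp [add_mul]) (fun _ _ _ ↦ by ext; simp)
    (fun _ _ _ ↦ by ext; simp [mul_add]) (fun _ _ _ ↦ by ext; simp)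

variable {R M}

@[simp]
lemma wedge_tmul (x y : M) : wedge R M (x ⊗ₜ y) = ιMulti R 2 ![x, y] := rfl

lemma wedge_surjective : Function.Surjective (wedge R M) := by
  rw [← LinearMap.range_eq_top, eq_top_iff, ← ιMulti_span, Submodule.span_le]
  rintro _ ⟨m, rfl⟩
  refine ⟨m 0 ⊗ₜ m 1, ?_⟩
  rw [wedge_tmul]
  congr 1
  ext i
  fin_cases i <;> rfl

variable {N : Type*} [AddCommGroup N] [Module R N]

lemma map_comp_wedge (f : M →ₗ[R] N) :
    map 2 f ∘ₗ wedge R M = wedge R N ∘ₗ TensorProduct.map f f := by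
  ext x y
  simp [wedge, map_apply_ιMulti, Matrix.vecTail]

lemma coe_map_apply {n : ℕ} (f : M →ₗ[R] N) (x : ⋀[R]^n M) :
    (map n f x : ExteriorAlgebra R N) = ExteriorAlgebra.map f x := by
  have hcomp : (⋀[R]^n N).subtype ∘ₗ map n f = (ExteriorAlgebra.map f).toLinearMap ∘ₗ
      (⋀[R]^n M).subtype := by
    ext m
    simp [ExteriorAlgebra.map_apply_ιMulti]
  exact LinearMap.congr_fun hcomp x

end exteriorPower

namespace Module.End

lemma IsSemisimple.of_surjective {R M N : Type*} [CommRing R] [AddCommGroup M] [Module R M]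
    [AddCommGroup N] [Module R N] {f : End R M} {g : End R N} (hf : f.IsSemisimple)
    (π : M →ₗ[R] N) (hπ : Function.Surjective π) (h : π ∘ₗ f = g ∘ₗ π) :
    g.IsSemisimple :=
  have : IsSemisimpleModule R[X] (AEval' f) := hf
  IsSemisimpleModule.of_surjective
    (LinearMap.ofAEval f ((AEval'.of g).toLinearMap ∘ₗ π) fun m ↦ by
      simpa [AEval'.X_smul_of] using LinearMap.congr_fun h m)
    ((AEval'.of g).surjective.comp (hπ.comp (AEval'.of f).symm.surjective))

variable {K M N : Type*} [Field K] [AddCommGroup M] [Module K M] [AddCommGroup N] [Module K N]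
  [FiniteDimensional K M]

lemma IsSemisimple.map_algHom {f : End K M} (hf : f.IsSemisimple) (φ : End K M →ₐ[K] End K N) :
    (φ f).IsSemisimple :=
  isSemisimple_of_squarefree_aeval_eq_zero hf.minpoly_squarefree <| by
    rw [aeval_algHom_apply, minpoly.aeval, map_zero]

variable [PerfectField K]

lemma IsSemisimple.tensorProduct_map [FiniteDimensional K N] {f : End K M} {g : End K N}
    (hf : f.IsSemisimple) (hg : g.IsSemisimple) : IsSemisimple (TensorProduct.map f g) := by
  have hcomm : Commute (f.rTensor N) (g.lTensor M) := by
    rw [commute_iff_eq, mul_eq_comp, mul_eq_comp, LinearMap.rTensor_comp_lTensor,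
      LinearMap.lTensor_comp_rTensor]
  rw [← LinearMap.rTensor_comp_lTensor, ← mul_eq_comp]
  exact .mul_of_commute hcomm (hf.map_algHom (rTensorAlgHom K M N))
    (hg.map_algHom (lTensorAlgHom K N M))

lemma IsSemisimple.exteriorPower_map_two {f : End K M} (hf : f.IsSemisimple) :
    IsSemisimple (exteriorPower.map 2 f) :=
  (hf.tensorProduct_map hf).of_surjective _ exteriorPower.wedge_surjective
    (exteriorPower.map_comp_wedge f).symm

end Module.End

/-- If `T` is a semisimple endomorphism of a finite-dimensional `ℚ`-vector space, then the
induced endomorphism `Λ²T` of the exterior square `⋀[ℚ]^2 V` (i.e. the restriction of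
`ExteriorAlgebra.map T` to the second exterior power) is semisimple. -/
theorem stmt_5 (V : Type*) [AddCommGroup V] [Module ℚ V] [FiniteDimensional ℚ V]
    (T : Module.End ℚ V) (hT : Squarefree (minpoly ℚ T))
    (S : Module.End ℚ (⋀[ℚ]^2 V))
    (hS : ∀ x : ⋀[ℚ]^2 V,
      (S x : ExteriorAlgebra ℚ V) = ExteriorAlgebra.map T (x : ExteriorAlgebra ℚ V)) :
    Squarefree (minpoly ℚ S) := by
  have hT' : T.IsSemisimple :=
    Module.End.isSemisimple_of_squarefree_aeval_eq_zero hT (minpoly.aeval ℚ T)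
  have hS' : S = exteriorPower.map 2 T :=
    LinearMap.ext fun x ↦ Subtype.ext <| by rw [hS, exteriorPower.coe_map_apply]
  rw [hS']
  exact hT'.exteriorPower_map_two.minpoly_squarefree
end

section
/- Let V be a finite-dimensional ℂ-vector space with a real structure (i.e., V = W ⊗_ℝ ℂ for a real vector space W with conjugation v ↦ v̄). Suppose F^• is a decreasing filtration of V by complex subspaces such that for some integer k and all r, F^r V ⊕ conj(F^{k-r+1} V) = V. Define V^{p,q} = F^p V ∩ conj(F^q V) for p + q = k. Then V = ⊕_{p+q=k} V^{p,q} and conj(V^{p,q}) = V^{q,p}. -/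
/-!
Write `Fbar q` for the conjugate of `F q`. Only the lattice of subspaces matters: it is modular,
`F` and `Fbar` are decreasing, and opposedness says `F r` and `Fbar (k - r + 1)` are complements.
Codisjointness at level `p + 1` and the modular law give `F p = F (p + 1) ⊔ V^{p,k-p}`, so
descending from `F b = ⊥` to `F a = ⊤` the pieces span everything. Every piece other than
`V^{p,k-p}` lies in `F (p + 1) ⊔ Fbar (k - p + 1)`, which meets `V^{p,k-p}` trivially by the
modular law and disjointness at levels `p` and `p + 1`. Conjugation swaps the pieces because
it is an involution.
-/

section ModularLattice

variable {α : Type*} [Lattice α] [IsModularLattice α]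

theorem eq_sup_inf_of_le_of_codisjoint [OrderTop α] {a b c : α} (hab : a ≤ b)
    (hac : Codisjoint a c) : b = a ⊔ b ⊓ c := by
  rw [inf_comm, ← sup_inf_assoc_of_le c hab, hac.eq_top, top_inf_eq]

theorem disjoint_inf_sup_of_le [OrderBot α] {a b c d : α} (hcd : c ≤ d)
    (hbc : Disjoint b c) (had : Disjoint a d) : Disjoint (b ⊓ d) (a ⊔ c) := by
  have hmod : (c ⊔ a) ⊓ d = c := by
    rw [sup_inf_assoc_of_le a hcd, had.eq_bot, sup_bot_eq]
  rw [disjoint_iff, inf_assoc, sup_comm, inf_comm d, hmod, hbc.eq_bot]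

end ModularLattice

namespace OpposedFiltrations

variable {α : Type*} [CompleteLattice α] [IsModularLattice α] {F Fbar : ℤ → α} {k : ℤ}

theorem eq_succ_sup_piece (hF : Antitone F)
    (hopp : ∀ r, IsCompl (F r) (Fbar (k - r + 1))) (p : ℤ) :
    F p = F (p + 1) ⊔ F p ⊓ Fbar (k - p) := by
  have hcodisj := (hopp (p + 1)).codisjoint
  rw [show k - (p + 1) + 1 = k - p by ring] at hcodisj
  exact eq_sup_inf_of_le_of_codisjoint (hF (Int.le_add_one le_rfl)) hcodisj

theorem iSupIndep_pieces (hF : Antitone F) (hFbar : Antitone Fbar)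
    (hopp : ∀ r, IsCompl (F r) (Fbar (k - r + 1))) :
    iSupIndep fun p => F p ⊓ Fbar (k - p) := by
  intro p
  have hothers : (⨆ (q) (_ : q ≠ p), F q ⊓ Fbar (k - q)) ≤ F (p + 1) ⊔ Fbar (k - p + 1) := by
    refine iSup₂_le fun q hqp => ?_
    rcases hqp.lt_or_gt with hlt | hgt
    · exact inf_le_right.trans ((hFbar (by omega)).trans le_sup_right)
    · exact inf_le_left.trans ((hF (by omega)).trans le_sup_left)
  have hdisj := (hopp (p + 1)).disjoint
  rw [show k - (p + 1) + 1 = k - p by ring] at hdisj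
  exact (disjoint_inf_sup_of_le (hFbar (Int.le_add_one le_rfl)) (hopp p).disjoint hdisj).mono_right
    hothers

theorem le_iSup_pieces (hF : Antitone F) (hopp : ∀ r, IsCompl (F r) (Fbar (k - r + 1)))
    {b : ℤ} (hb : F b = ⊥) (r : ℤ) : F r ≤ ⨆ p, F p ⊓ Fbar (k - p) := by
  induction r using Int.inductionOn' (b := b) with
  | zero => simp [hb]
  | succ n _ ih => exact (hF (Int.le_add_one le_rfl)).trans ih
  | pred n _ ih =>
    rw [eq_succ_sup_piece hF hopp (n - 1), sub_add_cancel]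
    exact sup_le ih (le_iSup (fun p => F p ⊓ Fbar (k - p)) (n - 1))

theorem iSup_pieces_eq_top (hF : Antitone F) (hopp : ∀ r, IsCompl (F r) (Fbar (k - r + 1)))
    {a b : ℤ} (ha : F a = ⊤) (hb : F b = ⊥) : ⨆ p, F p ⊓ Fbar (k - p) = ⊤ :=
  top_le_iff.1 (ha ▸ le_iSup_pieces hF hopp hb a)

end OpposedFiltrations

theorem stmt_8_general (V : Type*) [AddCommGroup V] [Module ℂ V]
    (σ : V →ₛₗ[starRingEnd ℂ] V) (hσ : ∀ v, σ (σ v) = v)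
    (F : ℤ → Submodule ℂ V) (hdec : ∀ r : ℤ, F (r + 1) ≤ F r) (k : ℤ)
    (hfull : ∃ a : ℤ, ∀ r ≤ a, F r = ⊤) (hzero : ∃ b : ℤ, ∀ r ≥ b, F r = ⊥)
    (hopp : ∀ r : ℤ, IsCompl (F r) (Submodule.comap σ (F (k - r + 1)))) :
    DirectSum.IsInternal (fun p : ℤ => F p ⊓ Submodule.comap σ (F (k - p))) ∧
    ∀ p : ℤ, Submodule.comap σ (F (k - p) ⊓ Submodule.comap σ (F p)) =
      F p ⊓ Submodule.comap σ (F (k - p)) := by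
  obtain ⟨a, ha⟩ := hfull
  obtain ⟨b, hb⟩ := hzero
  have hF : Antitone F := antitone_int_of_succ_le hdec
  have hFbar : Antitone fun q => Submodule.comap σ (F q) :=
    fun _ _ hqr => Submodule.comap_mono (hF hqr)
  refine ⟨?_, fun p => ?_⟩
  · rw [DirectSum.isInternal_submodule_iff_iSupIndep_and_iSup_eq_top]
    exact ⟨OpposedFiltrations.iSupIndep_pieces hF hFbar hopp,
      OpposedFiltrations.iSup_pieces_eq_top (Fbar := fun q => Submodule.comap σ (F q)) hF hopp
        (ha a le_rfl) (hb b le_rfl)⟩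
  · ext v
    simp only [Submodule.mem_comap, Submodule.mem_inf, hσ v]
    exact and_comm

/-- Hodge filtration vs Hodge decomposition: if `V` is a finite-dimensional complex vector
space with a real structure (given by an antilinear involution `σ`), and `F` is a finite
decreasing filtration satisfying the weight-`k` opposedness condition
`F^r ⊕ conj(F^(k-r+1)) = V`, then setting `V^(p,q) = F^p ∩ conj(F^q)` for `p + q = k`,
one has `V = ⊕_(p+q=k) V^(p,q)` and `conj(V^(p,q)) = V^(q,p)`. -/
theorem stmt_8 (V : Type*) [AddCommGroup V] [Module ℂ V] [FiniteDimensional ℂ V]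
    (σ : V →ₛₗ[starRingEnd ℂ] V) (hσ : ∀ v, σ (σ v) = v)
    (F : ℤ → Submodule ℂ V) (hdec : ∀ r : ℤ, F (r + 1) ≤ F r) (k : ℤ)
    (hfull : ∃ a : ℤ, ∀ r ≤ a, F r = ⊤) (hzero : ∃ b : ℤ, ∀ r ≥ b, F r = ⊥)
    (hopp : ∀ r : ℤ, IsCompl (F r) (Submodule.comap σ (F (k - r + 1)))) :
    DirectSum.IsInternal (fun p : ℤ => F p ⊓ Submodule.comap σ (F (k - p))) ∧
    ∀ p : ℤ, Submodule.comap σ (F (k - p) ⊓ Submodule.comap σ (F p)) =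
      F p ⊓ Submodule.comap σ (F (k - p)) :=
  stmt_8_general V σ hσ F hdec k hfull hzero hopp
end
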